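/- Let X be a finite-dimensional real normed space. Then X is universally left-stable and universally right-stable: for every real Banach space Z, both the pair (X, Z) and the pair (Z, X) are stable. -/

import Mathlib

open scoped ENNReal ZeroAtInfty

noncomputable section

/-- `f : X → Y` is a *standard ε-isometry*: `f 0 = 0` and
`|‖f x - f y‖ - ‖x - y‖| ≤ ε` for all `x, y`. -/
def StdEpsIsom {X Y : Type*} [NormedAddCommGroup X] [NormedAddCommGroup Y]
    (ε : ℝ) (f : X → Y) : Prop :=
  f 0 = 0 ∧ ∀ x y : X, |‖f x - f y‖ - ‖x - y‖| ≤ ε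

/-- `L(f)`: the closed linear span of the range of `f` in `Y`. -/
def Lf {X Y : Type*} [NormedAddCommGroup Y] [NormedSpace ℝ Y] (f : X → Y) :
    Submodule ℝ Y :=
  (Submodule.span ℝ (Set.range f)).topologicalClosure

theorem mem_Lf {X Y : Type*} [NormedAddCommGroup Y] [NormedSpace ℝ Y] (f : X → Y) (x : X) :
    f x ∈ Lf f :=
  Submodule.le_topologicalClosure _ (Submodule.subset_span ⟨x, rfl⟩)

/-- A standard ε-isometry `f` is *stable* if for some `α, γ > 0` there is a bounded linear
operator `T : L(f) → X` with `‖T‖ ≤ α` such that `‖T (f x) - x‖ ≤ γ ε` for all `x`. -/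
def IsStable {X Y : Type*} [NormedAddCommGroup X] [NormedSpace ℝ X]
    [NormedAddCommGroup Y] [NormedSpace ℝ Y] (ε : ℝ) (f : X → Y) : Prop :=
  ∃ α γ : ℝ, 0 < α ∧ 0 < γ ∧
    ∃ T : Lf f →L[ℝ] X, ‖T‖ ≤ α ∧ ∀ x : X, ‖T ⟨f x, mem_Lf f x⟩ - x‖ ≤ γ * ε

/-- The pair `(X, Y)` is *stable* if every standard ε-isometry `f : X → Y` (ε > 0) is stable. -/
def PairStable (X Y : Type*) [NormedAddCommGroup X] [NormedSpace ℝ X]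
    [NormedAddCommGroup Y] [NormedSpace ℝ Y] : Prop :=
  ∀ ε : ℝ, 0 < ε → ∀ f : X → Y, StdEpsIsom ε f → IsStable ε f

universe u

/-!
At a point `u` where the norm of `X` has derivative `g`, functionals `ψ_t` norming
`f (t • u) - f (-(t • u))` have a weak-* limit `φ` as `t → ∞` with `|φ ∘ f - g| ≤ 3ε`. In finite
dimension the norm is differentiable on a dense set, so finitely many such derivatives `g_i`
separate points, and a left inverse of `(g_i)ᵢ` composed with `(φ_i)ᵢ` is the required operator.
For the pair `(Z, X)`, an ε-isometry maps bounded separated sequences of `Z` to bounded separated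
sequences of `X`, so `Z` is finite-dimensional as well and the first case applies.
-/

open Filter Topology Metric

namespace StdEpsIsom

variable {X Y : Type*} [NormedAddCommGroup X] [NormedAddCommGroup Y] {ε : ℝ} {f : X → Y}

lemma nonneg (hf : StdEpsIsom ε f) : 0 ≤ ε :=
  (abs_nonneg _).trans (hf.2 0 0)

lemma norm_sub_le (hf : StdEpsIsom ε f) (x y : X) : ‖f x - f y‖ ≤ ‖x - y‖ + ε := by
  linarith [(abs_le.1 (hf.2 x y)).2]

lemma le_norm_sub (hf : StdEpsIsom ε f) (x y : X) : ‖x - y‖ - ε ≤ ‖f x - f y‖ := by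
  linarith [(abs_le.1 (hf.2 x y)).1]

lemma norm_le (hf : StdEpsIsom ε f) (x : X) : ‖f x‖ ≤ ‖x‖ + ε := by
  simpa [hf.1] using hf.norm_sub_le x 0

/-- A functional norming `f a - f (-a)` nearly attains its extreme values `±‖a‖` at `f (±a)`;
comparing `f x` with `f (±a)` then pins `ψ (f x)` between two differences of norms. -/
lemma norming_functional_bounds [NormedSpace ℝ X] [NormedSpace ℝ Y] (hf : StdEpsIsom ε f)
    {ψ : StrongDual ℝ Y} (hψ : ‖ψ‖ ≤ 1) {a : X} (hψa : ψ (f a - f (-a)) = ‖f a - f (-a)‖)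
    (x : X) : ‖a‖ - ‖a - x‖ - 3 * ε ≤ ψ (f x) ∧ ψ (f x) ≤ ‖x + a‖ - ‖a‖ + 3 * ε := by
  have hψle : ∀ y, |ψ y| ≤ ‖y‖ := fun y => by simpa using ψ.le_of_opNorm_le hψ y
  have h2a : ‖a - -a‖ = 2 * ‖a‖ := by
    rw [sub_neg_eq_add, ← two_smul ℝ a, norm_smul, Real.norm_two]
  have hfar := hf.le_norm_sub a (-a)
  have hpos := abs_le.1 ((hψle (f a)).trans (hf.norm_le a))
  have hneg := abs_le.1 ((hψle (f (-a))).trans ((hf.norm_le (-a)).trans_eq (by rw [norm_neg])))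
  have hax := abs_le.1 ((hψle (f a - f x)).trans (hf.norm_sub_le a x))
  have hxa := abs_le.1 ((hψle (f x - f (-a))).trans (hf.norm_sub_le x (-a)))
  rw [map_sub] at hψa hax hxa
  rw [sub_neg_eq_add] at hxa
  constructor <;> linarith

end StdEpsIsom

def normGradients (X : Type*) [NormedAddCommGroup X] [NormedSpace ℝ X] :
    Set (StrongDual ℝ X) :=
  {g | ∃ u, HasFDerivAt (‖·‖) g u}

section NormGradient

variable {X : Type*} [NormedAddCommGroup X] [NormedSpace ℝ X]

lemma tendsto_norm_add_smul_sub_of_hasFDerivAt {g : StrongDual ℝ X} {u : X}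
    (hu : HasFDerivAt (‖·‖) g u) (x : X) :
    Tendsto (fun t : ℝ => ‖x + t • u‖ - t * ‖u‖) atTop (𝓝 (g x)) := by
  refine (hu.lim_real x).congr' ?_
  filter_upwards [eventually_gt_atTop 0] with t ht
  rw [smul_eq_mul, mul_sub, show x + t • u = t • (u + t⁻¹ • x) by
    rw [smul_add, smul_inv_smul₀ ht.ne', add_comm], norm_smul, Real.norm_of_nonneg ht.le]

lemma apply_le_norm_add_sub_of_hasFDerivAt {g : StrongDual ℝ X} {u : X}
    (hu : HasFDerivAt (‖·‖) g u) (w : X) : g w ≤ ‖u + w‖ - ‖u‖ := by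
  refine le_of_tendsto (tendsto_norm_add_smul_sub_of_hasFDerivAt hu w) ?_
  filter_upwards [eventually_ge_atTop 1] with t ht
  have hsplit : w + t • u = (u + w) + (t - 1) • u := by
    rw [sub_smul, one_smul]; abel
  have := norm_add_le (u + w) ((t - 1) • u)
  rw [← hsplit, norm_smul, Real.norm_of_nonneg (by linarith)] at this
  linarith

/-- By convexity `‖u - v‖ ≥ ‖u‖` wherever the norm is differentiable at `u`, hence everywhere
by density, and `u = v` gives `v = 0`. -/
lemma eq_zero_of_forall_normGradients_apply_eq_zero [FiniteDimensional ℝ X] {v : X}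
    (hv : ∀ g ∈ normGradients X, g v = 0) : v = 0 := by
  have hsub : {u : X | DifferentiableAt ℝ (‖·‖) u} ⊆ {u | ‖u‖ ≤ ‖u + -v‖} := fun u hu => by
    have hder := hu.hasFDerivAt
    have := apply_le_norm_add_sub_of_hasFDerivAt hder (-v)
    rw [map_neg, hv _ ⟨u, hder⟩, neg_zero] at this
    exact sub_nonneg.1 this
  have hclosed : IsClosed {u : X | ‖u‖ ≤ ‖u + -v‖} :=
    isClosed_le continuous_norm (continuous_id.add continuous_const).norm
  have hv' := hclosed.closure_subset_iff.2 hsub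
    ((dense_differentiableAt_norm (E := X)).closure_eq ▸ Set.mem_univ v)
  simpa using hv'

lemma exists_finite_separating_subset_normGradients [FiniteDimensional ℝ X] :
    ∃ s ⊆ normGradients X, s.Finite ∧ ∀ v : X, (∀ g ∈ s, g v = 0) → v = 0 := by
  obtain ⟨s, hs, hspan, hli⟩ := exists_linearIndependent ℝ (normGradients X)
  refine ⟨s, hs, hli.setFinite, fun v hv => eq_zero_of_forall_normGradients_apply_eq_zero ?_⟩
  have hker : Submodule.span ℝ s ≤ LinearMap.ker (ContinuousLinearMap.apply ℝ ℝ v).toLinearMap :=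
    Submodule.span_le.2 hv
  exact fun g hg => hker (hspan ▸ Submodule.subset_span hg)

end NormGradient

/-- Banach–Alaoglu, read along an ultrafilter. -/
lemma exists_ultrafilter_tendsto_apply {𝕜 Y ι : Type*} [NontriviallyNormedField 𝕜]
    [ProperSpace 𝕜] [NormedAddCommGroup Y] [NormedSpace 𝕜 Y] (l : Filter ι) [l.NeBot]
    {ψ : ι → StrongDual 𝕜 Y} {r : ℝ} (hψ : ∀ i, ‖ψ i‖ ≤ r) :
    ∃ φ : StrongDual 𝕜 Y, ‖φ‖ ≤ r ∧ ∃ U : Ultrafilter ι, ↑U ≤ l ∧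
      ∀ y, Tendsto (fun i => ψ i y) U (𝓝 (φ y)) := by
  let U := Ultrafilter.of l
  obtain ⟨Φ, hΦ, hlim⟩ := (WeakDual.isCompact_closedBall (𝕜 := 𝕜) (E := Y) 0 r).ultrafilter_le_nhds
    (U.map fun i => StrongDual.toWeakDual (ψ i)) (by
      rw [Ultrafilter.coe_map, le_principal_iff]
      exact mem_map.2 (univ_mem' fun i => by simpa using hψ i))
  rw [Ultrafilter.coe_map] at hlim
  exact ⟨WeakDual.toStrongDual Φ, by simpa using hΦ, U, Ultrafilter.of_le l,
    fun y => ((WeakDual.eval_continuous y).tendsto Φ).comp hlim⟩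

namespace StdEpsIsom

variable {X Y : Type*} [NormedAddCommGroup X] [NormedSpace ℝ X] [NormedAddCommGroup Y]
  [NormedSpace ℝ Y] {ε : ℝ} {f : X → Y}

/-- Take `ψ_t` norming `f (t • u) - f (-(t • u))` and a weak-* limit `φ` of `ψ_t` as `t → ∞`:
with `a = t • u`, both bounds of `norming_functional_bounds` tend to `g x ∓ 3ε`. -/
lemma exists_dual_approx_of_mem_normGradients (hf : StdEpsIsom ε f) {g : StrongDual ℝ X}
    (hg : g ∈ normGradients X) :
    ∃ φ : StrongDual ℝ Y, ‖φ‖ ≤ 1 ∧ ∀ x, |φ (f x) - g x| ≤ 3 * ε := by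
  obtain ⟨u, hu⟩ := hg
  choose ψ hψ hψu using fun t : ℝ => exists_dual_vector'' ℝ (f (t • u) - f (-(t • u)))
  obtain ⟨φ, hφ, U, hU, hlim⟩ := exists_ultrafilter_tendsto_apply atTop hψ
  have hbounds : ∀ x, ∀ᶠ t in (U : Filter ℝ),
      t * ‖u‖ - ‖t • u - x‖ - 3 * ε ≤ ψ t (f x) ∧ ψ t (f x) ≤ ‖x + t • u‖ - t * ‖u‖ + 3 * ε := by
    intro x
    filter_upwards [hU (eventually_ge_atTop 0)] with t ht
    have h := hf.norming_functional_bounds (hψ t) (hψu t) x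
    rwa [norm_smul, Real.norm_of_nonneg ht] at h
  refine ⟨φ, hφ, fun x => abs_le.2 ⟨?_, ?_⟩⟩
  · have hlower := (tendsto_norm_add_smul_sub_of_hasFDerivAt hu (-x)).neg.sub_const (3 * ε)
    rw [map_neg, neg_neg] at hlower
    have := le_of_tendsto_of_tendsto (hlower.mono_left hU) (hlim (f x))
      ((hbounds x).mono fun t ht => by simp only [neg_add_eq_sub]; linarith [ht.1])
    linarith
  · have hupper := (tendsto_norm_add_smul_sub_of_hasFDerivAt hu x).add_const (3 * ε)
    have := le_of_tendsto_of_tendsto (hlim (f x)) (hupper.mono_left hU)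
      ((hbounds x).mono fun t ht => ht.2)
    linarith

end StdEpsIsom

section Stability

variable {X Y : Type*} [NormedAddCommGroup X] [NormedSpace ℝ X] [NormedAddCommGroup Y]
  [NormedSpace ℝ Y] {ε : ℝ} {f : X → Y}

lemma isStable_of_forall_norm_sub_le (hε : 0 ≤ ε) (T : Lf f →L[ℝ] X) {C : ℝ}
    (hT : ∀ x, ‖T ⟨f x, mem_Lf f x⟩ - x‖ ≤ C * ε) : IsStable ε f :=
  ⟨‖T‖ + 1, max C 0 + 1, by positivity, by positivity, T, by linarith [norm_nonneg T],
    fun x => (hT x).trans <| mul_le_mul_of_nonneg_right (by linarith [le_max_left C 0]) hε⟩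

/-- If finitely many functionals `g i` separate the points of `X` and each is approximated by
`φ i ∘ f`, then `T := Q ∘ (φ i)ᵢ` works, where `Q` is a left inverse of `(g i)ᵢ`. -/
lemma isStable_of_separating_approx {ι : Type*} [Fintype ι] (hε : 0 ≤ ε)
    {g : ι → StrongDual ℝ X} (hg : ∀ v, (∀ i, g i v = 0) → v = 0) {φ : ι → StrongDual ℝ Y}
    {C : ℝ} (hC : 0 ≤ C) (hφ : ∀ i x, |φ i (f x) - g i x| ≤ C * ε) : IsStable ε f := by
  let P : X →ₗ[ℝ] ι → ℝ := LinearMap.pi fun i => (g i : X →ₗ[ℝ] ℝ)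
  obtain ⟨Q, hQ⟩ := P.exists_leftInverse_of_injective
    (LinearMap.ker_eq_bot'.2 fun v hv => hg v (congrFun hv))
  let Qc := LinearMap.toContinuousLinearMap Q
  refine isStable_of_forall_norm_sub_le hε (Qc ∘L ContinuousLinearMap.pi φ ∘L (Lf f).subtypeL)
    (C := ‖Qc‖ * C) fun x => ?_
  have hQx : Qc (P x) = x := LinearMap.congr_fun hQ x
  have herr : ‖(fun i => φ i (f x)) - P x‖ ≤ C * ε :=
    (pi_norm_le_iff_of_nonneg (by positivity)).2 fun i => by simpa [P] using hφ i x
  calc ‖Qc (fun i => φ i (f x)) - x‖ = ‖Qc ((fun i => φ i (f x)) - P x)‖ := by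
        rw [map_sub, hQx]
    _ ≤ ‖Qc‖ * (C * ε) := Qc.le_opNorm_of_le herr
    _ = ‖Qc‖ * C * ε := by ring

end Stability

namespace StdEpsIsom

variable {X Y : Type*} [NormedAddCommGroup X] [NormedSpace ℝ X] [NormedAddCommGroup Y]
  [NormedSpace ℝ Y] {ε : ℝ}

lemma isStable_of_finiteDimensional [FiniteDimensional ℝ X] {f : X → Y}
    (hf : StdEpsIsom ε f) : IsStable ε f := by
  obtain ⟨s, hs, hfin, hsep⟩ := exists_finite_separating_subset_normGradients (X := X)
  have := hfin.fintype
  choose φ _ hφ using fun g : s => hf.exists_dual_approx_of_mem_normGradients (hs g.2)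
  exact isStable_of_separating_approx hf.nonneg (g := Subtype.val)
    (fun v hv => hsep v fun g hg => hv ⟨g, hg⟩) zero_le_three hφ

/-- Otherwise Riesz's lemma gives a bounded `1`-separated sequence `z n`; then `f ((ε + 1) • z n)`
is bounded and `1`-separated in `Y`, contradicting Bolzano–Weierstrass. -/
lemma finiteDimensional_of_codomain [FiniteDimensional ℝ Y] {f : X → Y}
    (hf : StdEpsIsom ε f) : FiniteDimensional ℝ X := by
  by_contra hX
  obtain ⟨R, z, -, hzR, hsep⟩ := exists_seq_norm_le_one_le_norm_sub hX
  have hc : 0 < ε + 1 := by linarith [hf.nonneg]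
  have hbdd : ∀ n, f ((ε + 1) • z n) ∈ closedBall (0 : Y) ((ε + 1) * R + ε) := fun n => by
    rw [mem_closedBall_zero_iff]
    refine (hf.norm_le _).trans ?_
    rw [norm_smul, Real.norm_of_nonneg hc.le]
    gcongr
    exact hzR n
  obtain ⟨a, -, φ, hφ, hlim⟩ := tendsto_subseq_of_bounded isBounded_closedBall hbdd
  obtain ⟨N, hN⟩ := Metric.cauchySeq_iff'.1 hlim.cauchySeq 1 one_pos
  have hnear := hN (N + 1) N.le_succ
  have hfar := hf.le_norm_sub ((ε + 1) • z (φ (N + 1))) ((ε + 1) • z (φ N))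
  rw [← smul_sub, norm_smul, Real.norm_of_nonneg hc.le] at hfar
  have hz := hsep (hφ.injective.ne N.succ_ne_self)
  rw [dist_eq_norm] at hnear
  simp only [Function.comp_apply] at hnear
  nlinarith

end StdEpsIsom

/-- Every finite-dimensional real normed space is universally left-stable and universally
right-stable. -/
theorem stmt4 {X : Type u} [NormedAddCommGroup X] [NormedSpace ℝ X] [FiniteDimensional ℝ X] :
    ∀ (Z : Type u) [NormedAddCommGroup Z] [NormedSpace ℝ Z] [CompleteSpace Z],
      PairStable X Z ∧ PairStable Z X := by
  intro Z _ _ _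
  refine ⟨fun _ _ _ hf => hf.isStable_of_finiteDimensional, fun _ _ _ hf => ?_⟩
  have := hf.finiteDimensional_of_codomain
  exact hf.isStable_of_finiteDimensional
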